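/- For every positive integer n, the number of partitions of 2n with largest part minus smallest part equal to n equals 2·p(n) − p(n+1), where p is the partition function. -/

import Mathlib

/-!
Let `s` be the smallest part. Swapping the largest part `s + n` of a partition of `2n` for a
second copy of `s` gives a bijection with the partitions of `n` whose smallest part is repeated.
The partitions of `n` whose smallest part occurs once correspond, by raising that part by one, to
the partitions of `n + 1` without a part `1`, and there are `p(n + 1) - p(n)` of those.
-/

open Multiset

theorem Nat.card_subtype_add_card_subtype_not (α : Type*) [Finite α] (p : α → Prop) :
    Nat.card {a // p a} + Nat.card {a // ¬p a} = Nat.card α := by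
  classical
  rw [← Nat.card_sum, Nat.card_congr (Equiv.sumCompl p)]

namespace Nat.Partition

variable {m k d : ℕ}

/-- The smallest part of `π`, with junk value `0` for the empty partition of `0`. -/
noncomputable def minPart (π : m.Partition) : ℕ := sInf {t | t ∈ π.parts}

theorem minPart_le (π : m.Partition) {t : ℕ} (ht : t ∈ π.parts) : π.minPart ≤ t :=
  Nat.sInf_le ht

theorem minPart_mem_of_mem (π : m.Partition) {t : ℕ} (ht : t ∈ π.parts) : π.minPart ∈ π.parts :=
  Nat.sInf_mem (s := {t | t ∈ π.parts}) ⟨t, ht⟩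

theorem minPart_mem (π : m.Partition) (hm : m ≠ 0) : π.minPart ∈ π.parts := by
  obtain ⟨t, ht⟩ := exists_mem_of_ne_zero (s := π.parts) fun h => by
    rw [← π.parts_sum, h, sum_zero] at hm
    exact hm rfl
  exact π.minPart_mem_of_mem ht

theorem minPart_eq {π : m.Partition} {s : ℕ} (hs : s ∈ π.parts) (h : ∀ t ∈ π.parts, s ≤ t) :
    π.minPart = s :=
  IsLeast.csInf_eq ⟨hs, h⟩

def replacePart (π : m.Partition) {a : ℕ} (ha : a ∈ π.parts) (b : ℕ) (hb : 0 < b)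
    (hk : m + b = k + a) : k.Partition where
  parts := b ::ₘ π.parts.erase a
  parts_pos := by
    intro t ht
    rcases mem_cons.1 ht with rfl | ht
    exacts [hb, π.parts_pos (mem_of_mem_erase ht)]
  parts_sum := by
    have := congrArg Multiset.sum (cons_erase ha)
    rw [sum_cons, π.parts_sum] at this
    rw [sum_cons]
    omega

@[simp]
theorem replacePart_parts (π : m.Partition) {a : ℕ} (ha : a ∈ π.parts) (b : ℕ) (hb : 0 < b)
    (hk : m + b = k + a) :
    (π.replacePart ha b hb hk : k.Partition).parts = b ::ₘ π.parts.erase a :=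
  rfl

theorem minPart_replacePart (π : m.Partition) {a : ℕ} (ha : a ∈ π.parts) (b : ℕ) (hb : 0 < b)
    (hk : m + b = k + a) (h : ∀ t ∈ π.parts.erase a, b ≤ t) :
    (π.replacePart ha b hb hk : k.Partition).minPart = b :=
  minPart_eq (by simp) (by simpa using h)

def HasRepeatedMinPart (π : m.Partition) : Prop := 2 ≤ π.parts.count π.minPart

/-- Largest part minus smallest part equals `d`. -/
def HasSpread (π : m.Partition) (d : ℕ) : Prop :=
  ∃ M ∈ π.parts, ∃ s ∈ π.parts, (∀ t ∈ π.parts, t ≤ M) ∧ (∀ t ∈ π.parts, s ≤ t) ∧ M = s + d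

noncomputable def raiseMinPart (π : m.Partition) (hs : π.minPart ∈ π.parts) (d : ℕ) :
    (m + d).Partition :=
  π.replacePart hs (π.minPart + d) (by have := π.parts_pos hs; omega) (by omega)

@[simp]
theorem raiseMinPart_parts (π : m.Partition) (hs : π.minPart ∈ π.parts) (d : ℕ) :
    (π.raiseMinPart hs d).parts = (π.minPart + d) ::ₘ π.parts.erase π.minPart :=
  rfl

theorem HasRepeatedMinPart.minPart_mem {π : m.Partition} (h : π.HasRepeatedMinPart) :
    π.minPart ∈ π.parts :=
  count_pos.1 (by unfold HasRepeatedMinPart at h; omega)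

theorem HasRepeatedMinPart.minPart_mem_erase {π : m.Partition} (h : π.HasRepeatedMinPart) :
    π.minPart ∈ π.parts.erase π.minPart := by
  rw [← count_pos, count_erase_self]
  unfold HasRepeatedMinPart at h
  omega

theorem HasRepeatedMinPart.minPart_raiseMinPart {π : m.Partition} (h : π.HasRepeatedMinPart) :
    (π.raiseMinPart h.minPart_mem d).minPart = π.minPart := by
  refine minPart_eq (by simp [h.minPart_mem_erase]) ?_
  simp only [raiseMinPart_parts, mem_cons, forall_eq_or_imp]
  exact ⟨by omega, fun t ht => π.minPart_le (mem_of_mem_erase ht)⟩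

theorem HasRepeatedMinPart.hasSpread_raiseMinPart {π : m.Partition} (h : π.HasRepeatedMinPart)
    (hmd : m ≤ d) : (π.raiseMinPart h.minPart_mem d).HasSpread d := by
  refine ⟨π.minPart + d, by simp, π.minPart, by simp [h.minPart_mem_erase], ?_, ?_, rfl⟩
  · simp only [raiseMinPart_parts, mem_cons, forall_eq_or_imp]
    exact ⟨le_rfl, fun t ht => by have := le_of_mem_parts (mem_of_mem_erase ht); omega⟩
  · rw [← h.minPart_raiseMinPart]
    exact fun t => minPart_le _

theorem HasSpread.minPart_add_mem {π : m.Partition} (h : π.HasSpread d) :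
    π.minPart + d ∈ π.parts := by
  obtain ⟨M, hM, s, hs, -, hmin, rfl⟩ := h
  rwa [minPart_eq hs hmin]

noncomputable def lowerMaxPart (π : (m + d).Partition) (h : π.HasSpread d) : m.Partition :=
  π.replacePart h.minPart_add_mem π.minPart
    (π.parts_pos (π.minPart_mem_of_mem h.minPart_add_mem)) (by omega)

@[simp]
theorem lowerMaxPart_parts (π : (m + d).Partition) (h : π.HasSpread d) :
    (lowerMaxPart π h).parts = π.minPart ::ₘ π.parts.erase (π.minPart + d) :=
  rfl

theorem minPart_lowerMaxPart (π : (m + d).Partition) (h : π.HasSpread d) :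
    (lowerMaxPart π h).minPart = π.minPart :=
  minPart_replacePart _ _ _ _ _ fun _ ht => π.minPart_le (mem_of_mem_erase ht)

theorem hasRepeatedMinPart_lowerMaxPart (hd : 0 < d) (π : (m + d).Partition)
    (h : π.HasSpread d) : (lowerMaxPart π h).HasRepeatedMinPart := by
  have := count_pos.2 (π.minPart_mem_of_mem h.minPart_add_mem)
  rw [HasRepeatedMinPart, minPart_lowerMaxPart, lowerMaxPart_parts, count_cons_self,
    count_erase_of_ne (by omega)]
  omega

noncomputable def spreadEquiv (hd : 0 < d) (hmd : m ≤ d) :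
    {π : (m + d).Partition // π.HasSpread d} ≃ {π : m.Partition // π.HasRepeatedMinPart} where
  toFun π := ⟨lowerMaxPart π.1 π.2, hasRepeatedMinPart_lowerMaxPart hd π.1 π.2⟩
  invFun π := ⟨π.1.raiseMinPart π.2.minPart_mem d, π.2.hasSpread_raiseMinPart hmd⟩
  left_inv π := Subtype.ext <| Partition.ext <| by
    rw [raiseMinPart_parts, minPart_lowerMaxPart, lowerMaxPart_parts, erase_cons_head,
      cons_erase π.2.minPart_add_mem]
  right_inv π := Subtype.ext <| Partition.ext <| by
    rw [lowerMaxPart_parts, π.2.minPart_raiseMinPart, raiseMinPart_parts, erase_cons_head,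
      cons_erase π.2.minPart_mem]

theorem minPart_lt_of_not_hasRepeatedMinPart {π : m.Partition} (h : ¬π.HasRepeatedMinPart)
    {t : ℕ} (ht : t ∈ π.parts.erase π.minPart) : π.minPart < t := by
  refine lt_of_le_of_ne (π.minPart_le (mem_of_mem_erase ht)) fun hst => ?_
  rw [← hst, ← count_pos, count_erase_self] at ht
  exact h (by unfold HasRepeatedMinPart; omega)

theorem minPart_raiseMinPart_one (hm : m ≠ 0) {π : m.Partition} (h : ¬π.HasRepeatedMinPart) :
    (π.raiseMinPart (π.minPart_mem hm) 1).minPart = π.minPart + 1 :=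
  minPart_replacePart _ _ _ _ _ fun _ ht => minPart_lt_of_not_hasRepeatedMinPart h ht

theorem one_notMem_raiseMinPart_one (hm : m ≠ 0) {π : m.Partition} (h : ¬π.HasRepeatedMinPart) :
    1 ∉ (π.raiseMinPart (π.minPart_mem hm) 1).parts := fun h1 => by
  have := minPart_le _ h1
  rw [minPart_raiseMinPart_one hm h] at this
  have := π.parts_pos (π.minPart_mem hm)
  omega

theorem two_le_minPart {π : (m + 1).Partition} (h : 1 ∉ π.parts) : 2 ≤ π.minPart := by
  have hs := π.minPart_mem m.succ_ne_zero
  have := π.parts_pos hs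
  have : π.minPart ≠ 1 := fun h1 => h (by rwa [h1] at hs)
  omega

noncomputable def lowerMinPart (π : (m + 1).Partition) (h : 1 ∉ π.parts) : m.Partition :=
  π.replacePart (π.minPart_mem m.succ_ne_zero) (π.minPart - 1)
    (by have := two_le_minPart h; omega) (by have := two_le_minPart h; omega)

@[simp]
theorem lowerMinPart_parts (π : (m + 1).Partition) (h : 1 ∉ π.parts) :
    (lowerMinPart π h).parts = (π.minPart - 1) ::ₘ π.parts.erase π.minPart :=
  rfl

theorem minPart_lowerMinPart (π : (m + 1).Partition) (h : 1 ∉ π.parts) :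
    (lowerMinPart π h).minPart = π.minPart - 1 :=
  minPart_replacePart _ _ _ _ _ fun _ ht =>
    (π.minPart_le (mem_of_mem_erase ht)).trans' (by omega)

theorem not_hasRepeatedMinPart_lowerMinPart (π : (m + 1).Partition) (h : 1 ∉ π.parts) :
    ¬(lowerMinPart π h).HasRepeatedMinPart := by
  have : π.minPart - 1 ∉ π.parts.erase π.minPart := fun ht => by
    have := π.minPart_le (mem_of_mem_erase ht)
    have := two_le_minPart h
    omega
  rw [HasRepeatedMinPart, minPart_lowerMinPart, lowerMinPart_parts, count_cons_self,
    count_eq_zero.2 this]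
  omega

noncomputable def singleMinPartEquiv (hm : m ≠ 0) :
    {π : m.Partition // ¬π.HasRepeatedMinPart} ≃ {π : (m + 1).Partition // 1 ∉ π.parts} where
  toFun π := ⟨π.1.raiseMinPart (π.1.minPart_mem hm) 1, one_notMem_raiseMinPart_one hm π.2⟩
  invFun π := ⟨lowerMinPart π.1 π.2, not_hasRepeatedMinPart_lowerMinPart π.1 π.2⟩
  left_inv π := Subtype.ext <| Partition.ext <| by
    rw [lowerMinPart_parts, minPart_raiseMinPart_one hm π.2, raiseMinPart_parts, erase_cons_head,
      Nat.add_sub_cancel, cons_erase (π.1.minPart_mem hm)]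
  right_inv π := Subtype.ext <| Partition.ext <| by
    rw [raiseMinPart_parts, minPart_lowerMinPart, lowerMinPart_parts, erase_cons_head,
      Nat.sub_add_cancel (by have := two_le_minPart π.2; omega),
      cons_erase (π.1.minPart_mem m.succ_ne_zero)]

end Nat.Partition

/-- The number of partitions of `2n` with largest part exceeding the smallest part by `n`
equals `2·p(n) − p(n+1)`. -/
theorem stmt_6 (n : ℕ) (hn : 0 < n) :
    (Nat.card {π : (2 * n).Partition //
        ∃ M ∈ π.parts, ∃ s ∈ π.parts,
          (∀ t ∈ π.parts, t ≤ M) ∧ (∀ t ∈ π.parts, s ≤ t) ∧ M = s + n} : ℤ)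
      = 2 * (Nat.card (Nat.Partition n) : ℤ) - (Nat.card (Nat.Partition (n + 1)) : ℤ) := by
  open Nat.Partition in
  have spread : Nat.card {π : (n + n).Partition // π.HasSpread n}
      = Nat.card {π : n.Partition // π.HasRepeatedMinPart} :=
    Nat.card_congr (spreadEquiv hn le_rfl)
  have single := Nat.card_congr (singleMinPartEquiv hn.ne')
  have withOne : Nat.card {π : (n + 1).Partition // 1 ∈ π.parts} = Nat.card n.Partition :=
    Nat.card_congr (partitionWithPartEquiv le_rfl (by omega))
  have splitRepeated := Nat.card_subtype_add_card_subtype_not n.Partition HasRepeatedMinPart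
  have splitOne := Nat.card_subtype_add_card_subtype_not (n + 1).Partition (1 ∈ ·.parts)
  rw [two_mul n]
  change (Nat.card {π : (n + n).Partition // π.HasSpread n} : ℤ) = _
  omega
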